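/- arXiv:1602.00449 — 3 statements merged into one kernel-verified Lean document; each statement's English description precedes it below -/
import Mathlib

section
/- Let Φ, Θ ∈ L²(ℝ) and Γ(x) = −i·sign(x). Then the convolution identity (ΓΦ ⋆ ΓΘ)(x) − (Φ ⋆ Θ)(x) = Γ(x)·[(Φ ⋆ ΓΘ)(x) + (ΓΦ ⋆ Θ)(x)] holds for all x ∈ ℝ. -/
open MeasureTheory Filter Set

/-- Convolution `(f ⋆ g)(x) = ∫ f(y) g(x-y) dy`. -/
noncomputable def conv (f g : ℝ → ℂ) (x : ℝ) : ℂ := ∫ y : ℝ, f y * g (x - y)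

/-- `Γ(x) = -i·sign(x)`. -/
noncomputable def Gam (x : ℝ) : ℂ := -Complex.I * (Real.sign x : ℂ)

/-! Off the null set `{0, x}` the integrands of the two sides agree pointwise, because for
`a, b ≠ 0` one has `sign a · sign b + 1 = sign (a + b) · (sign a + sign b)`: both sides vanish
when the signs differ and equal `2` when they agree. Square-integrability of `Φ` and `Θ` (and
hence of `ΓΦ` and `ΓΘ`, as `|Γ| ≤ 1`) makes every convolution integrand integrable by
Cauchy–Schwarz, so the integrals may be combined. -/

namespace Real

lemma sign_monotone : Monotone Real.sign := by
  intro a b hab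
  rcases lt_trichotomy a 0 with ha | rfl | ha <;> rcases lt_trichotomy b 0 with hb | rfl | hb <;>
    simp [sign_of_neg, sign_of_pos, sign_zero, *] <;> linarith

lemma measurable_sign : Measurable Real.sign := sign_monotone.measurable

lemma abs_sign_le_one (a : ℝ) : |Real.sign a| ≤ 1 := by
  rcases sign_apply_eq a with h | h | h <;> simp [h]

lemma sign_mul_sign_add_one {a b : ℝ} (ha : a ≠ 0) (hb : b ≠ 0) :
    Real.sign a * Real.sign b + 1 = Real.sign (a + b) * (Real.sign a + Real.sign b) := by
  rcases ha.lt_or_gt with ha | ha <;> rcases hb.lt_or_gt with hb | hb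
  · rw [sign_of_neg ha, sign_of_neg hb, sign_of_neg (add_neg ha hb)]; norm_num
  · rw [sign_of_neg ha, sign_of_pos hb]; norm_num
  · rw [sign_of_pos ha, sign_of_neg hb]; norm_num
  · rw [sign_of_pos ha, sign_of_pos hb, sign_of_pos (add_pos ha hb)]; norm_num

end Real

lemma measurable_gam : Measurable Gam :=
  measurable_const.mul (Complex.measurable_ofReal.comp Real.measurable_sign)

lemma norm_gam_le_one (x : ℝ) : ‖Gam x‖ ≤ 1 := by
  simpa [Gam] using Real.abs_sign_le_one x

lemma memLp_top_gam (μ : Measure ℝ) : MemLp Gam ⊤ μ :=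
  memLp_top_of_bound measurable_gam.aestronglyMeasurable 1 (ae_of_all _ norm_gam_le_one)

lemma MeasureTheory.MemLp.gam_mul {p : ENNReal} {μ : Measure ℝ} {f : ℝ → ℂ} (hf : MemLp f p μ) :
    MemLp (fun y => Gam y * f y) p μ :=
  hf.mul' (memLp_top_gam μ)

lemma gam_mul_gam_sub_one {a b : ℝ} (ha : a ≠ 0) (hb : b ≠ 0) :
    Gam a * Gam b - 1 = Gam (a + b) * (Gam a + Gam b) := by
  have h : ((Real.sign a * Real.sign b + 1 : ℝ) : ℂ)
      = ((Real.sign (a + b) * (Real.sign a + Real.sign b) : ℝ) : ℂ) := by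
    rw [Real.sign_mul_sign_add_one ha hb]
  push_cast at h
  unfold Gam
  linear_combination
    ((Real.sign a : ℂ) * Real.sign b - Real.sign (a + b) * (Real.sign a + Real.sign b))
      * Complex.I_sq - h

lemma integrable_mul_comp_sub_of_memLp_two {f g : ℝ → ℂ} (hf : MemLp f 2 volume)
    (hg : MemLp g 2 volume) (x : ℝ) : Integrable (fun y => f y * g (x - y)) volume :=
  hf.integrable_mul (hg.comp_measurePreserving (Measure.measurePreserving_sub_left volume x))

/-- For `Φ, Θ ∈ L²(ℝ)` the convolution identity
`(ΓΦ ⋆ ΓΘ)(x) − (Φ ⋆ Θ)(x) = Γ(x)·[(Φ ⋆ ΓΘ)(x) + (ΓΦ ⋆ Θ)(x)]` holds for all `x`. -/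
theorem gamma_convolution_identity (Φ Θ : ℝ → ℂ)
    (hΦ : MemLp Φ 2 (volume : Measure ℝ))
    (hΘ : MemLp Θ 2 (volume : Measure ℝ)) :
    ∀ x : ℝ,
      conv (fun y => Gam y * Φ y) (fun y => Gam y * Θ y) x - conv Φ Θ x
        = Gam x * (conv Φ (fun y => Gam y * Θ y) x
            + conv (fun y => Gam y * Φ y) Θ x) := by
  intro x
  have hGΦ := hΦ.gam_mul
  have hGΘ := hΘ.gam_mul
  unfold conv
  rw [← integral_sub (integrable_mul_comp_sub_of_memLp_two hGΦ hGΘ x)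
      (integrable_mul_comp_sub_of_memLp_two hΦ hΘ x),
    ← integral_add (integrable_mul_comp_sub_of_memLp_two hΦ hGΘ x)
      (integrable_mul_comp_sub_of_memLp_two hGΦ hΘ x),
    ← integral_const_mul]
  refine integral_congr_ae ?_
  filter_upwards [(Set.toFinite {0, x}).countable.ae_notMem volume] with y hy
  have hy0 : y ≠ 0 := fun h => hy (by simp [h])
  have hxy : x - y ≠ 0 := sub_ne_zero.2 fun h => hy (by simp [h])
  have key := gam_mul_gam_sub_one hy0 hxy
  rw [add_sub_cancel] at key
  linear_combination Φ y * Θ (x - y) * key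
end

section
/- Let ρ : ℝ → ℝ be a nonnegative integrable function and define the Stieltjes transform G(z) = ∫_ℝ ρ(x)/(z−x) dx for z ∈ ℂ∖ℝ. Then for x ∈ ℝ where ρ is continuous and the Hilbert transform H[ρ](x) exists, lim_{ε↓0} (1/π) G(x + iε) = H[ρ](x) − i ρ(x) (Sokhotski–Plemelj formula). -/
/-!
For `ε > 0` and real `u`,
`1 / (u + iε) = 𝟙{ε ≤ |u|} / u + ε⁻¹ (R (u / ε) - i P (u / ε))`,
where `P v = (1 + v²)⁻¹` is the Cauchy kernel and `R = plemeljRemainder` is odd with `|R| ≤ P`.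
Integrating against `ρ (y)` with `u = x - y`, the first term is the truncated Hilbert integral,
which tends to `π H[ρ](x)`. The other two are approximate identities at scale `ε`, so they tend
to `(∫ R) ρ(x) = 0` and `(∫ P) ρ(x) = π ρ(x)`. The peak-function theorem behind this needs
nonnegative kernels, so it is applied to `R + 2P ≥ P` and to `P`.
-/

open MeasureTheory Filter Set
open Bornology Topology

section ApproximateIdentity

variable {E : Type*} [NormedAddCommGroup E] [NormedSpace ℝ E]

theorem tendsto_integral_mul_comp_mul_smul_of_nonneg [CompleteSpace E]
    {φ : ℝ → ℝ} (hφ : ∀ v, 0 ≤ φ v) (hφ₀ : ∫ v, φ v ≠ 0)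
    (hdecay : Tendsto (fun v ↦ |v| * φ v) (cobounded ℝ) (𝓝 0))
    {g : ℝ → E} {x : ℝ} (hg : Integrable g) (hgx : ContinuousAt g x) :
    Tendsto (fun c : ℝ ↦ ∫ y, (c * φ (c * (x - y))) • g y) atTop
      (𝓝 ((∫ v, φ v) • g x)) := by
  set I := ∫ v, φ v
  have hnormalized := tendsto_integral_comp_smul_smul_of_integrable' (μ := volume)
    (φ := fun v ↦ I⁻¹ * φ v) (fun v ↦ mul_nonneg (inv_nonneg.2 (integral_nonneg hφ)) (hφ v))
    (by rw [integral_const_mul, inv_mul_cancel₀ hφ₀])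
    (by simpa [mul_left_comm] using hdecay.const_mul I⁻¹) hg hgx
  convert hnormalized.const_smul I using 2 with c
  simp only [Module.finrank_self, pow_one, smul_eq_mul, ← integral_smul, smul_smul]
  congr 1 with y
  field_simp

theorem integrable_mul_comp_mul_smul_of_abs_le
    {ψ : ℝ → ℝ} (hψm : Measurable ψ) {C : ℝ} (hψ : ∀ v, |ψ v| ≤ C)
    {g : ℝ → E} (hg : Integrable g) (x c : ℝ) :
    Integrable (fun y ↦ (c * ψ (c * (x - y))) • g y) := by
  refine hg.bdd_smul (|c| * C)
    (measurable_const.mul (hψm.comp (by fun_prop))).aestronglyMeasurable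
    (Eventually.of_forall fun y ↦ ?_)
  rw [Real.norm_eq_abs, abs_mul]
  exact mul_le_mul_of_nonneg_left (hψ _) (abs_nonneg c)

theorem abs_inv_one_add_sq_le_one (v : ℝ) : |(1 + v ^ 2)⁻¹| ≤ 1 := by
  rw [abs_of_pos (by positivity)]
  exact inv_le_one_of_one_le₀ (by nlinarith [sq_nonneg v])

theorem tendsto_abs_mul_inv_one_add_sq_cobounded :
    Tendsto (fun v : ℝ ↦ |v| * (1 + v ^ 2)⁻¹) (cobounded ℝ) (𝓝 0) := by
  refine squeeze_zero (fun v ↦ by positivity) (fun v ↦ ?_)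
    ((continuous_abs.tendsto' 0 0 abs_zero).comp tendsto_inv₀_cobounded)
  rcases eq_or_ne v 0 with rfl | hv
  · simp
  · simp only [Function.comp_apply, abs_inv]
    rw [← div_eq_mul_inv, div_le_iff₀ (by positivity), inv_mul_eq_div,
      le_div_iff₀ (by positivity)]
    nlinarith [sq_abs v]

theorem tendsto_abs_mul_cobounded_of_le_mul_inv_one_add_sq {φ : ℝ → ℝ} {C : ℝ}
    (hφ : ∀ v, 0 ≤ φ v) (hφC : ∀ v, φ v ≤ C * (1 + v ^ 2)⁻¹) :
    Tendsto (fun v ↦ |v| * φ v) (cobounded ℝ) (𝓝 0) := by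
  refine squeeze_zero (fun v ↦ mul_nonneg (abs_nonneg v) (hφ v)) (fun v ↦ ?_)
    (by simpa using tendsto_abs_mul_inv_one_add_sq_cobounded.const_mul C)
  calc |v| * φ v ≤ |v| * (C * (1 + v ^ 2)⁻¹) := mul_le_mul_of_nonneg_left (hφC v) (abs_nonneg v)
    _ = C * (|v| * (1 + v ^ 2)⁻¹) := by ring

theorem tendsto_integral_mul_comp_mul_smul_of_abs_le [CompleteSpace E]
    {ψ : ℝ → ℝ} (hψm : Measurable ψ) (hψ : ∀ v, |ψ v| ≤ (1 + v ^ 2)⁻¹)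
    {g : ℝ → E} {x : ℝ} (hg : Integrable g) (hgx : ContinuousAt g x) :
    Tendsto (fun c : ℝ ↦ ∫ y, (c * ψ (c * (x - y))) • g y) atTop
      (𝓝 ((∫ v, ψ v) • g x)) := by
  have hψ₁ : ∀ v, |ψ v| ≤ 1 := fun v ↦
    (hψ v).trans ((le_abs_self _).trans (abs_inv_one_add_sq_le_one v))
  have hψint : Integrable ψ := integrable_inv_one_add_sq.mono' hψm.aestronglyMeasurable
    (Eventually.of_forall hψ)
  set φ : ℝ → ℝ := fun v ↦ ψ v + 2 * (1 + v ^ 2)⁻¹ with hφ_def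
  have hφ_ge : ∀ v, (1 + v ^ 2)⁻¹ ≤ φ v := fun v ↦ by linarith [neg_abs_le (ψ v), hψ v]
  have hφ_le : ∀ v, φ v ≤ 3 * (1 + v ^ 2)⁻¹ := fun v ↦ by linarith [le_abs_self (ψ v), hψ v]
  have hφ_nonneg : ∀ v, 0 ≤ φ v := fun v ↦ (inv_pos.2 (by positivity)).le.trans (hφ_ge v)
  have hφ_int_pos : 0 < ∫ v, φ v := by
    refine Real.pi_pos.trans_le ?_
    rw [← integral_univ_inv_one_add_sq]
    exact integral_mono integrable_inv_one_add_sq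
      (hψint.add (integrable_inv_one_add_sq.const_mul 2)) hφ_ge
  have hφ := tendsto_integral_mul_comp_mul_smul_of_nonneg hφ_nonneg hφ_int_pos.ne'
    (tendsto_abs_mul_cobounded_of_le_mul_inv_one_add_sq hφ_nonneg hφ_le) hg hgx
  have hP : Tendsto (fun c : ℝ ↦ ∫ y, (c * (1 + (c * (x - y)) ^ 2)⁻¹) • g y) atTop
      (𝓝 ((∫ v : ℝ, (1 + v ^ 2)⁻¹) • g x)) :=
    tendsto_integral_mul_comp_mul_smul_of_nonneg (fun v ↦ by positivity)
      (by rw [integral_univ_inv_one_add_sq]; exact Real.pi_ne_zero)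
      (tendsto_abs_mul_cobounded_of_le_mul_inv_one_add_sq (C := 1) (fun v ↦ by positivity)
        (fun v ↦ (one_mul _).ge)) hg hgx
  have hsplit : ∀ c, ∫ y, (c * φ (c * (x - y))) • g y
      = (∫ y, (c * ψ (c * (x - y))) • g y)
        + (2 : ℝ) • ∫ y, (c * (1 + (c * (x - y)) ^ 2)⁻¹) • g y := by
    intro c
    have hP_int : Integrable fun y ↦ (2 : ℝ) • (c * (1 + (c * (x - y)) ^ 2)⁻¹) • g y :=
      (integrable_mul_comp_mul_smul_of_abs_le (by fun_prop) abs_inv_one_add_sq_le_one hg x c).smul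
        (2 : ℝ)
    rw [← integral_smul, ← integral_add (integrable_mul_comp_mul_smul_of_abs_le hψm hψ₁ hg x c)
      hP_int]
    congr 1 with y
    simp only [hφ_def, smul_smul, ← add_smul]
    ring_nf
  have hlim := hφ.sub (hP.const_smul (2 : ℝ))
  simp only [hsplit, add_sub_cancel_right] at hlim
  convert hlim using 2
  rw [integral_add hψint (integrable_inv_one_add_sq.const_mul 2), integral_const_mul]
  simp only [smul_smul, add_smul, add_sub_cancel_right]

end ApproximateIdentity

noncomputable def truncInv (ε u : ℝ) : ℝ := if ε ≤ |u| then u⁻¹ else 0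

/-- The real part of `1 / (v + i)` minus the principal-value kernel `truncInv 1`. -/
noncomputable def plemeljRemainder (v : ℝ) : ℝ := v / (1 + v ^ 2) - truncInv 1 v

theorem measurable_truncInv (ε : ℝ) : Measurable (truncInv ε) :=
  Measurable.ite (measurableSet_le measurable_const measurable_abs) measurable_inv measurable_const

theorem integral_truncInv_sub_mul (ρ : ℝ → ℝ) (ε x : ℝ) :
    ∫ y, truncInv ε (x - y) * ρ y = ∫ y in {y | ε ≤ |x - y|}, ρ y / (x - y) := by
  rw [← integral_indicator (measurableSet_le measurable_const (by fun_prop))]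
  congr 1 with y
  simp only [indicator, mem_ofPred_eq, truncInv, div_eq_inv_mul]
  split_ifs <;> simp

theorem abs_truncInv_le {ε : ℝ} (hε : 0 < ε) (u : ℝ) : |truncInv ε u| ≤ ε⁻¹ := by
  unfold truncInv
  split_ifs with h
  · rw [abs_inv]
    exact inv_anti₀ hε h
  · simpa using hε.le

theorem truncInv_neg (ε u : ℝ) : truncInv ε (-u) = -truncInv ε u := by
  unfold truncInv
  split_ifs <;> simp_all

theorem measurable_plemeljRemainder : Measurable plemeljRemainder :=
  (measurable_id.div (by fun_prop)).sub (measurable_truncInv 1)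

theorem abs_plemeljRemainder_le (v : ℝ) : |plemeljRemainder v| ≤ (1 + v ^ 2)⁻¹ := by
  have hpos : 0 < 1 + v ^ 2 := by positivity
  unfold plemeljRemainder truncInv
  split_ifs with h
  · have hv : 0 < |v| := one_pos.trans_le h
    rw [show v / (1 + v ^ 2) - v⁻¹ = -(1 / (v * (1 + v ^ 2))) by
      field_simp [abs_pos.1 hv]; ring]
    rw [abs_neg, abs_div, abs_one, abs_mul, abs_of_pos hpos, one_div]
    exact inv_anti₀ hpos (le_mul_of_one_le_left hpos.le h)
  · rw [sub_zero, abs_div, abs_of_pos hpos, div_eq_mul_inv]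
    exact mul_le_of_le_one_left (inv_pos.2 hpos).le (not_le.1 h).le

theorem plemeljRemainder_neg (v : ℝ) : plemeljRemainder (-v) = -plemeljRemainder v := by
  simp only [plemeljRemainder, truncInv_neg, neg_sq, neg_div]
  ring

theorem integral_plemeljRemainder : ∫ v, plemeljRemainder v = 0 := by
  have h := integral_neg_eq_self plemeljRemainder volume
  simp only [plemeljRemainder_neg, integral_neg] at h
  linarith

theorem truncInv_add_mul_plemeljRemainder {ε : ℝ} (hε : 0 < ε) (u : ℝ) :
    truncInv ε u + ε⁻¹ * plemeljRemainder (ε⁻¹ * u) = u / (u ^ 2 + ε ^ 2) := by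
  have hscale : truncInv 1 (ε⁻¹ * u) = ε * truncInv ε u := by
    have hiff : 1 ≤ |ε⁻¹ * u| ↔ ε ≤ |u| := by
      rw [abs_mul, abs_inv, abs_of_pos hε, ← div_eq_inv_mul, one_le_div hε]
    simp only [truncInv, hiff]
    split_ifs
    · field_simp
    · rw [mul_zero]
  rw [plemeljRemainder, hscale]
  field_simp
  ring

theorem inv_ofReal_add_I_mul {ε : ℝ} (hε : ε ≠ 0) (u : ℝ) :
    ((u : ℂ) + Complex.I * ε)⁻¹ = ((u / (u ^ 2 + ε ^ 2) : ℝ) : ℂ)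
      - Complex.I * ((ε⁻¹ * (1 + (ε⁻¹ * u) ^ 2)⁻¹ : ℝ) : ℂ) := by
  have hS : (u : ℂ) ^ 2 + (ε : ℂ) ^ 2 ≠ 0 := by
    exact_mod_cast (by positivity : u ^ 2 + ε ^ 2 ≠ 0)
  rw [show ε⁻¹ * (1 + (ε⁻¹ * u) ^ 2)⁻¹ = ε / (u ^ 2 + ε ^ 2) by field_simp; ring]
  refine inv_eq_of_mul_eq_one_right ?_
  push_cast
  field_simp
  ring_nf
  rw [Complex.I_sq]
  ring

theorem integral_div_ofReal_add_I_mul_sub {ρ : ℝ → ℝ} (hρ : Integrable ρ) {ε : ℝ}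
    (hε : 0 < ε) (x : ℝ) :
    ∫ y : ℝ, (ρ y : ℂ) / (((x : ℂ) + Complex.I * ε) - y)
      = ((∫ y, truncInv ε (x - y) * ρ y : ℝ) : ℂ)
        + ((∫ y, (ε⁻¹ * plemeljRemainder (ε⁻¹ * (x - y))) • ρ y : ℝ) : ℂ)
        - Complex.I * ((∫ y, (ε⁻¹ * (1 + (ε⁻¹ * (x - y)) ^ 2)⁻¹) • ρ y : ℝ) : ℂ) := by
  have hPV : Integrable fun y ↦ truncInv ε (x - y) * ρ y :=
    hρ.bdd_mul ((measurable_truncInv ε).comp (by fun_prop)).aestronglyMeasurable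
      (Eventually.of_forall fun y ↦ abs_truncInv_le hε (x - y))
  have hR := integrable_mul_comp_mul_smul_of_abs_le measurable_plemeljRemainder
    (fun v ↦ (abs_plemeljRemainder_le v).trans ((le_abs_self _).trans
      (abs_inv_one_add_sq_le_one v))) hρ x ε⁻¹
  have hP := integrable_mul_comp_mul_smul_of_abs_le (ψ := fun v ↦ (1 + v ^ 2)⁻¹)
    (by fun_prop) abs_inv_one_add_sq_le_one hρ x ε⁻¹
  simp only [← integral_complex_ofReal, ← integral_const_mul]
  rw [← integral_add hPV.ofReal hR.ofReal,
    ← integral_sub (hPV.ofReal.add hR.ofReal) (hP.ofReal.const_mul _)]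
  congr 1 with y
  rw [div_eq_mul_inv,
    show (x : ℂ) + Complex.I * ε - y = ((x - y : ℝ) : ℂ) + Complex.I * ε by push_cast; ring,
    inv_ofReal_add_I_mul hε.ne', ← truncInv_add_mul_plemeljRemainder hε]
  simp only [smul_eq_mul]
  push_cast
  ring

theorem sokhotski_plemelj_upper_general (ρ : ℝ → ℝ)
    (hint : Integrable ρ (volume : Measure ℝ))
    (x : ℝ) (hcont : ContinuousAt ρ x) (Hx : ℝ)
    (hH : Tendsto (fun ε : ℝ => ∫ y in {y : ℝ | ε ≤ |x - y|}, ρ y / (x - y))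
      (nhdsWithin 0 (Set.Ioi 0)) (nhds (Real.pi * Hx))) :
    Tendsto
      (fun ε : ℝ => (1 / (Real.pi : ℂ)) *
        ∫ y : ℝ, (ρ y : ℂ) / (((x : ℂ) + Complex.I * ε) - y))
      (nhdsWithin 0 (Set.Ioi 0))
      (nhds ((Hx : ℂ) - Complex.I * (ρ x : ℂ))) := by
  have hPV : Tendsto (fun ε ↦ ∫ y, truncInv ε (x - y) * ρ y) (𝓝[>] 0) (𝓝 (Real.pi * Hx)) :=
    hH.congr fun ε ↦ (integral_truncInv_sub_mul ρ ε x).symm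
  have hR := (tendsto_integral_mul_comp_mul_smul_of_abs_le measurable_plemeljRemainder
    abs_plemeljRemainder_le hint hcont).comp tendsto_inv_nhdsGT_zero
  have hP := (tendsto_integral_mul_comp_mul_smul_of_abs_le (ψ := fun v ↦ (1 + v ^ 2)⁻¹)
    (by fun_prop) (fun v ↦ (abs_of_pos (by positivity)).le) hint hcont).comp tendsto_inv_nhdsGT_zero
  rw [integral_plemeljRemainder, zero_smul] at hR
  rw [integral_univ_inv_one_add_sq, smul_eq_mul] at hP
  have hlim := ((((Complex.continuous_ofReal.tendsto _).comp hPV).add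
    ((Complex.continuous_ofReal.tendsto _).comp hR)).sub
    (((Complex.continuous_ofReal.tendsto _).comp hP).const_mul Complex.I)).const_mul
    (1 / (Real.pi : ℂ))
  have hvalue : 1 / (Real.pi : ℂ) * (((Real.pi * Hx : ℝ) : ℂ) + ((0 : ℝ) : ℂ)
      - Complex.I * ((Real.pi * ρ x : ℝ) : ℂ)) = Hx - Complex.I * ρ x := by
    have hπ : (Real.pi : ℂ) ≠ 0 := Complex.ofReal_ne_zero.2 Real.pi_ne_zero
    push_cast
    field_simp
    ring
  rw [hvalue] at hlim
  refine hlim.congr' (eventually_nhdsWithin_of_forall fun ε hε ↦ ?_)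
  simp only [Function.comp_apply]
  rw [integral_div_ofReal_add_I_mul_sub hint hε]

/-- Sokhotski–Plemelj formula (approach from the upper half-plane): for a nonnegative
integrable density `ρ` continuous at `x` whose Hilbert transform exists at `x`,
`lim_{ε↓0} (1/π) G(x + iε) = H[ρ](x) − i ρ(x)`, where
`G(z) = ∫ ρ(y)/(z−y) dy` is the Stieltjes transform. -/
theorem sokhotski_plemelj_upper (ρ : ℝ → ℝ) (hpos : ∀ x, 0 ≤ ρ x)
    (hint : Integrable ρ (volume : Measure ℝ))
    (x : ℝ) (hcont : ContinuousAt ρ x) (Hx : ℝ)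
    (hH : Tendsto (fun ε : ℝ => ∫ y in {y : ℝ | ε ≤ |x - y|}, ρ y / (x - y))
      (nhdsWithin 0 (Set.Ioi 0)) (nhds (Real.pi * Hx))) :
    Tendsto
      (fun ε : ℝ => (1 / (Real.pi : ℂ)) *
        ∫ y : ℝ, (ρ y : ℂ) / (((x : ℂ) + Complex.I * ε) - y))
      (nhdsWithin 0 (Set.Ioi 0))
      (nhds ((Hx : ℂ) - Complex.I * (ρ x : ℂ))) :=
  sokhotski_plemelj_upper_general ρ hint x hcont Hx hH
end

section
/- At t = 1 the two-source density is given, for 0 < |x| < 3√3/2, by ρ(1,x) = (3/(4π))·(2|x|/(3√3))^{1/3}·[(1+√(1−4x²/27))^{2/3} − (1−√(1−4x²/27))^{2/3}], and this function behaves asymptotically as (√3/(2π))|x|^{1/3} as x → 0. -/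
/-
For `0 < |x| < 3√3/2` Cardano's formula splits the real cubic `W (W - x)² - x` as
`(W - r)(W - c)(W - c̄)` with `r` real and `c = a + iβ`, where `β = π ρtwo(x) > 0`.
Along `z = x + iε` the root `w = G z` stays bounded and `(w - r)(w - c)(w - c̄) = O(ε)`,
so the limit `-π ρ(x)` of `Im w` is the imaginary part of one of the three roots.
It is not `β` because `Im w < 0`, and it is not `0`: the root continuing `r` is
`r + iε (2r² - 2xr + 1)/|r - c|² + o(ε)`, which lies in the upper half-plane.
Hence `ρ(x) = β/π = ρtwo(x)`. The asymptotics hold because `ρtwo(x) / |x|^{1/3}` is a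
continuous function of `x` whose value at `0` is `√3/(2π)`.
-/

open Filter Set

/-- The explicit two-source density at time `t = 1`:
`ρ(1,x) = (3/(4π))·(2|x|/(3√3))^{1/3}·[(1+√(1−4x²/27))^{2/3} − (1−√(1−4x²/27))^{2/3}]`. -/
noncomputable def ρtwo (x : ℝ) : ℝ :=
  (3 / (4 * Real.pi)) * (2 * |x| / (3 * Real.sqrt 3)) ^ ((1 : ℝ) / 3) *
    ((1 + Real.sqrt (1 - 4 * x ^ 2 / 27)) ^ ((2 : ℝ) / 3)
      - (1 - Real.sqrt (1 - 4 * x ^ 2 / 27)) ^ ((2 : ℝ) / 3))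

open Complex Topology

lemma rpow_div_three_pow_three {t : ℝ} (ht : 0 ≤ t) (k : ℝ) : (t ^ (k / 3)) ^ 3 = t ^ k := by
  rw [← Real.rpow_mul_natCast ht]; norm_num

theorem cardano_factorization (A B y : ℂ) :
    y ^ 3 - 3 * A * B * y - (A ^ 3 + B ^ 3) =
      (y - (A + B)) * ((y - (-(A + B) / 2 + √3 / 2 * (A - B) * I)) *
        (y - (-(A + B) / 2 - √3 / 2 * (A - B) * I))) := by
  have h : ((√3 : ℂ) * I) ^ 2 = -3 := by
    rw [mul_pow, I_sq, ← ofReal_pow, Real.sq_sqrt zero_le_three]; norm_num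
  linear_combination ((A - B) ^ 2 / 4 * (y - (A + B))) * h

def mergeCubic (z W : ℂ) : ℂ := W ^ 3 - 2 * z * W ^ 2 + z ^ 2 * W - z

theorem mergeCubic_eq_of_cardano {x A B : ℝ} (hAB : A * B = x ^ 2 / 9)
    (hsum : A ^ 3 + B ^ 3 = x - 2 * x ^ 3 / 27) (W : ℂ) :
    mergeCubic x W = (W - (A + B + 2 * x / 3 : ℝ)) *
      ((W - ((2 * x / 3 - (A + B) / 2 : ℝ) + (√3 / 2 * (A - B) : ℝ) * I)) *
        (W - ((2 * x / 3 - (A + B) / 2 : ℝ) - (√3 / 2 * (A - B) : ℝ) * I))) := by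
  have hAB' : (A : ℂ) * B = x ^ 2 / 9 := by exact_mod_cast hAB
  have hsum' : (A : ℂ) ^ 3 + B ^ 3 = x - 2 * x ^ 3 / 27 := by exact_mod_cast hsum
  unfold mergeCubic
  push_cast
  linear_combination
    cardano_factorization A B (W - 2 * x / 3) + 3 * (W - 2 * x / 3) * hAB' + hsum'

theorem exists_mergeCubic_factorization_of_pos {x : ℝ} (hx : 0 < x) (hx' : x < 3 * √3 / 2) :
    ∃ r a β : ℝ, 0 < β ∧ Real.pi * ρtwo x = β ∧ x < r ∧
      ∀ W : ℂ, mergeCubic x W = (W - r) * ((W - (a + β * I)) * (W - (a - β * I))) := by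
  have h3 : √3 ^ 2 = 3 := Real.sq_sqrt zero_le_three
  have h3pos : 0 < √3 := by positivity
  set s := √(1 - 4 * x ^ 2 / 27) with hs
  have hs2 : s ^ 2 = 1 - 4 * x ^ 2 / 27 := Real.sq_sqrt (by nlinarith)
  have hs0 : 0 < s := Real.sqrt_pos.mpr (by nlinarith)
  have hs1 : s < 1 := by nlinarith
  set t := (2 * x / (3 * √3)) ^ ((1 : ℝ) / 3) with ht
  set u := (1 + s) ^ ((2 : ℝ) / 3) with hu
  set v := (1 - s) ^ ((2 : ℝ) / 3) with hv
  have ht3 : t ^ 3 = 2 * x / (3 * √3) := by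
    rw [ht, rpow_div_three_pow_three (by positivity), Real.rpow_one]
  have hu3 : u ^ 3 = (1 + s) ^ 2 := by
    rw [hu, rpow_div_three_pow_three (by positivity), Real.rpow_two]
  have hv3 : v ^ 3 = (1 - s) ^ 2 := by
    rw [hv, rpow_div_three_pow_three (by linarith), Real.rpow_two]
  have ht0 : 0 < t := by positivity
  have hvu : v < u := Real.rpow_lt_rpow (by linarith) (by linarith) (by norm_num)
  -- `A³, B³ = x (1 ± s)² / 4` are Cardano's cube roots;
  -- the factor `√3/2` makes `π ρtwo x = √3/2 (A - B)`.
  set A := √3 / 2 * t * u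
  set B := √3 / 2 * t * v
  have hAB : A * B = x ^ 2 / 9 := by
    refine (pow_left_inj₀ (by positivity) (by positivity) three_ne_zero).mp ?_
    calc (A * B) ^ 3 = (√3 ^ 2) ^ 3 / 64 * (t ^ 3) ^ 2 * u ^ 3 * v ^ 3 := by ring
      _ = _ := by
        rw [ht3, hu3, hv3, h3]
        field_simp
        linear_combination (-8748 * (1 - s ^ 2 + 4 * x ^ 2 / 27)) * hs2 - 64 * x ^ 4 * h3
  have hsum : A ^ 3 + B ^ 3 = x - 2 * x ^ 3 / 27 := by
    calc A ^ 3 + B ^ 3 = √3 ^ 2 * √3 / 8 * t ^ 3 * (u ^ 3 + v ^ 3) := by ring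
      _ = _ := by
        rw [ht3, hu3, hv3, h3]
        field_simp
        linear_combination 108 * hs2
  refine ⟨A + B + 2 * x / 3, 2 * x / 3 - (A + B) / 2, √3 / 2 * (A - B), ?_, ?_, ?_,
    mergeCubic_eq_of_cardano hAB hsum⟩
  · have : 0 < A - B := by simp only [A, B]; nlinarith [mul_pos h3pos ht0]
    positivity
  · rw [ρtwo, abs_of_pos hx, ← hs]
    field_simp
    linear_combination (-2 * t * (u - v)) * h3
  · have hB0 : 0 ≤ B := by positivity
    have hA0 : 0 ≤ A := by positivity
    nlinarith [sq_nonneg (A - B)]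

theorem ρtwo_neg (x : ℝ) : ρtwo (-x) = ρtwo x := by
  simp [ρtwo]

theorem mergeCubic_neg (x W : ℂ) : mergeCubic (-x) (-W) = -mergeCubic x W := by
  unfold mergeCubic; ring

theorem exists_mergeCubic_factorization {x : ℝ} (hx : x ≠ 0) (hx' : |x| < 3 * √3 / 2) :
    ∃ r a β : ℝ, 0 < β ∧ Real.pi * ρtwo x = β ∧ 0 < 2 * r ^ 2 - 2 * x * r + 1 ∧
      ∀ W : ℂ, mergeCubic x W = (W - r) * ((W - (a + β * I)) * (W - (a - β * I))) := by
  rcases hx.lt_or_gt with hneg | hpos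
  · obtain ⟨r, a, β, hβ, hρ, hr, hfac⟩ :=
      exists_mergeCubic_factorization_of_pos (neg_pos.mpr hneg) (by rwa [← abs_of_neg hneg])
    refine ⟨-r, -a, β, hβ, by rwa [← ρtwo_neg], by nlinarith, fun W => ?_⟩
    rw [← neg_neg (mergeCubic x W), ← mergeCubic_neg, ← Complex.ofReal_neg, hfac]
    push_cast
    ring
  · obtain ⟨r, a, β, hβ, hρ, hr, hfac⟩ :=
      exists_mergeCubic_factorization_of_pos hpos (by rwa [← abs_of_pos hpos])
    exact ⟨r, a, β, hβ, hρ, by nlinarith, hfac⟩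

theorem norm_lt_of_mergeCubic_eq_zero {z W : ℂ} (h : mergeCubic z W = 0) :
    ‖W‖ < ‖z‖ + 1 := by
  by_contra! hle
  have hWz : W * (W - z) ^ 2 = z := by unfold mergeCubic at h; linear_combination h
  have h1 : 1 ≤ ‖W - z‖ := by linarith [norm_sub_norm_le W z]
  have := congrArg norm hWz
  rw [norm_mul, norm_pow] at this
  nlinarith [mul_le_mul_of_nonneg_left (one_le_pow₀ h1 : 1 ≤ ‖W - z‖ ^ 2) (norm_nonneg W)]

theorem mergeCubic_sub_mergeCubic (x z W : ℂ) :
    mergeCubic x W - mergeCubic z W = (z - x) * (2 * W ^ 2 - (z + x) * W + 1) := by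
  unfold mergeCubic; ring

section Limits

variable {α : Type*} {l : Filter α} {w : α → ℂ} {L : ℝ}

theorem isBoundedUnder_norm_inv_sub {c : ℂ} (him : Tendsto (fun t => (w t).im) l (𝓝 L))
    (hc : L ≠ c.im) : IsBoundedUnder (· ≤ ·) l (fun t => ‖(w t - c)⁻¹‖) := by
  have hpos : 0 < |L - c.im| := abs_pos.mpr (sub_ne_zero.mpr hc)
  have hδ : 0 < |L - c.im| / 2 := half_pos hpos
  have hfar : ∀ᶠ t in l, |L - c.im| / 2 < |(w t - c).im| := by
    simpa using ((him.sub_const c.im).abs).eventually (lt_mem_nhds (half_lt_self hpos))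
  refine isBoundedUnder_of_eventually_le (a := (|L - c.im| / 2)⁻¹) ?_
  filter_upwards [hfar] with t ht
  rw [norm_inv]
  exact inv_anti₀ hδ (ht.le.trans (abs_im_le_norm _))

theorem tendsto_of_tendsto_mul_sub_of_im_ne {c₁ c₂ c₃ : ℂ}
    (hprod : Tendsto (fun t => (w t - c₁) * ((w t - c₂) * (w t - c₃))) l (𝓝 0))
    (him : Tendsto (fun t => (w t).im) l (𝓝 L)) (h₂ : L ≠ c₂.im) (h₃ : L ≠ c₃.im) :
    Tendsto w l (𝓝 c₁) := by
  have hsub : ∀ᶠ t in l,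
      (w t - c₁) * ((w t - c₂) * (w t - c₃)) * (w t - c₂)⁻¹ * (w t - c₃)⁻¹ = w t - c₁ := by
    have hne : ∀ {c : ℂ}, L ≠ c.im → ∀ᶠ t in l, w t - c ≠ 0 := fun {c} hc =>
      (him.eventually_ne hc).mono fun t ht h => ht (by simpa [sub_eq_zero] using congrArg im h)
    filter_upwards [hne h₂, hne h₃] with t ht₂ ht₃
    field_simp
  have h₂' := hprod.zero_mul_isBoundedUnder_le (isBoundedUnder_norm_inv_sub him h₂)
  have h₃' := h₂'.zero_mul_isBoundedUnder_le (isBoundedUnder_norm_inv_sub him h₃)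
  simpa using (h₃'.congr' hsub).add_const c₁

end Limits

theorem tendsto_ofReal_add_I_mul_nhdsGT (x : ℝ) :
    Tendsto (fun ε : ℝ => (x : ℂ) + I * ε) (𝓝[>] 0) (𝓝 x) :=
  ((continuous_const.add (continuous_const.mul continuous_ofReal)).tendsto' 0 x
    (by simp)).mono_left nhdsWithin_le_nhds

theorem norm_ofReal_add_I_mul_le (x ε : ℝ) (hε : 0 ≤ ε) :
    ‖(x : ℂ) + I * ε‖ ≤ |x| + ε := by
  simpa [abs_of_nonneg hε] using norm_add_le (x : ℂ) (I * ε)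

theorem tendsto_mergeCubic_nhdsGT {x : ℝ} {w : ℝ → ℂ}
    (hroot : ∀ ε : ℝ, 0 < ε → mergeCubic (x + I * ε) (w ε) = 0) :
    Tendsto (fun ε => mergeCubic x (w ε)) (𝓝[>] 0) (𝓝 0) := by
  have hsmall : ∀ᶠ ε in 𝓝[>] (0 : ℝ), ε ∈ Ioo 0 1 := Ioo_mem_nhdsGT zero_lt_one
  have hbdd : IsBoundedUnder (· ≤ ·) (𝓝[>] 0)
      (norm ∘ fun ε : ℝ => 2 * w ε ^ 2 - ((x + I * ε) + x) * w ε + 1) := by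
    refine isBoundedUnder_of_eventually_le
      (a := 2 * (|x| + 2) ^ 2 + (2 * |x| + 1) * (|x| + 2) + 1) ?_
    filter_upwards [hsmall] with ε ⟨hε0, hε1⟩
    have hz := norm_ofReal_add_I_mul_le x ε hε0.le
    have hw : ‖w ε‖ ≤ |x| + 2 := by
      linarith [norm_lt_of_mergeCubic_eq_zero (hroot ε hε0)]
    have hzx : ‖(x + I * ε) + x‖ ≤ 2 * |x| + 1 := by
      linarith [norm_add_le ((x : ℂ) + I * ε) x, Complex.norm_real x, Real.norm_eq_abs x]
    simp only [Function.comp_apply]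
    calc _ ≤ ‖2 * w ε ^ 2‖ + ‖((x + I * ε) + x) * w ε‖ + ‖(1 : ℂ)‖ :=
          (norm_add_le _ _).trans (add_le_add_left (norm_sub_le _ _) _)
      _ ≤ _ := by
          rw [norm_mul, norm_mul, norm_pow, norm_one, Complex.norm_two]
          gcongr
  have hlin : Tendsto (fun ε : ℝ => ((x : ℂ) + I * ε) - x) (𝓝[>] 0) (𝓝 0) := by
    simpa using (tendsto_ofReal_add_I_mul_nhdsGT x).sub_const (x : ℂ)
  refine (hlin.zero_mul_isBoundedUnder_le hbdd).congr' ?_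
  filter_upwards [self_mem_nhdsWithin] with ε hε
  rw [← mergeCubic_sub_mergeCubic, hroot ε hε, sub_zero]

theorem not_tendsto_real_root {x r a β : ℝ} (hβ : 0 < β) (hq : 0 < 2 * r ^ 2 - 2 * x * r + 1)
    (hfac : ∀ W : ℂ, mergeCubic x W = (W - r) * ((W - (a + β * I)) * (W - (a - β * I))))
    {w : ℝ → ℂ} (hroot : ∀ ε : ℝ, 0 < ε → mergeCubic (x + I * ε) (w ε) = 0)
    (him : ∀ ε : ℝ, 0 < ε → (w ε).im < 0) : ¬ Tendsto w (𝓝[>] 0) (𝓝 r) := by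
  -- `w - r = iε Q / P` with `Q / P → (2r² - 2xr + 1) / |r - (a + βi)|² > 0`,
  -- so `Im w > 0` for small `ε`.
  intro hw
  set P : ℂ → ℂ := fun W => (W - (a + β * I)) * (W - (a - β * I))
  set Q : ℝ → ℂ := fun ε => 2 * w ε ^ 2 - ((x + I * ε) + x) * w ε + 1
  have hPr : P r = ((r - a) ^ 2 + β ^ 2 : ℝ) := by
    simp only [P]; push_cast; linear_combination (-β ^ 2 : ℂ) * I_sq
  have hPr0 : P r ≠ 0 := by rw [hPr]; exact_mod_cast (by positivity : (r - a) ^ 2 + β ^ 2 ≠ 0)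
  have hP : Tendsto (fun ε => P (w ε)) (𝓝[>] 0) (𝓝 (P r)) :=
    (hw.sub_const _).mul (hw.sub_const _)
  have hQ : Tendsto Q (𝓝[>] 0) (𝓝 (2 * r ^ 2 - 2 * x * r + 1 : ℝ)) := by
    have := (((hw.pow 2).const_mul 2).sub
      (((tendsto_ofReal_add_I_mul_nhdsGT x).add_const (x : ℂ)).mul hw)).add_const 1
    convert this using 2
    push_cast; ring
  have hre : Tendsto (fun ε => (Q ε / P (w ε)).re) (𝓝[>] 0)
      (𝓝 ((2 * r ^ 2 - 2 * x * r + 1) / ((r - a) ^ 2 + β ^ 2))) := by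
    have := (continuous_re.tendsto _).comp (hQ.div hP hPr0)
    rwa [hPr, ← ofReal_div, Function.comp_def, ofReal_re] at this
  obtain ⟨ε, hε, hpos⟩ : ∃ ε : ℝ, 0 < ε ∧ 0 < (Q ε / P (w ε)).re :=
    (eventually_mem_nhdsWithin.and (hre.eventually (lt_mem_nhds (by positivity)))).exists
  have hid : (w ε - r) * P (w ε) = I * ε * Q ε := by
    have h := mergeCubic_sub_mergeCubic x (x + I * ε) (w ε)
    rw [hroot ε hε, sub_zero, hfac, add_sub_cancel_left] at h
    exact h
  have hPw : P (w ε) ≠ 0 := fun h => by simp [h] at hpos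
  have hwim : (w ε).im = ε * (Q ε / P (w ε)).re := by
    have := congrArg im (eq_div_of_mul_eq hPw hid)
    simpa [mul_div_assoc] using this
  linarith [him ε hε, mul_pos hε hpos]

theorem eq_neg_of_tendsto_im_root {x r a β L : ℝ} (hβ : 0 < β)
    (hq : 0 < 2 * r ^ 2 - 2 * x * r + 1)
    (hfac : ∀ W : ℂ, mergeCubic x W = (W - r) * ((W - (a + β * I)) * (W - (a - β * I))))
    {w : ℝ → ℂ} (hroot : ∀ ε : ℝ, 0 < ε → mergeCubic (x + I * ε) (w ε) = 0)
    (him : ∀ ε : ℝ, 0 < ε → (w ε).im < 0)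
    (hL : Tendsto (fun ε => (w ε).im) (𝓝[>] 0) (𝓝 L)) :
    L = -β := by
  have hL0 : L ≤ 0 :=
    le_of_tendsto hL (eventually_nhdsWithin_of_forall fun ε hε => (him ε hε).le)
  by_contra hne
  refine not_tendsto_real_root hβ hq hfac hroot him
    (tendsto_of_tendsto_mul_sub_of_im_ne (c₂ := a + β * I) (c₃ := a - β * I) ?_ hL ?_ ?_)
  · simpa only [hfac] using tendsto_mergeCubic_nhdsGT hroot
  · simp only [add_im, ofReal_im, mul_im, ofReal_re, I_im, I_re]; linarith
  · simpa using hne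

theorem tendsto_ρtwo_div_rpow :
    Tendsto (fun x : ℝ => ρtwo x / |x| ^ ((1 : ℝ) / 3)) (𝓝[≠] 0)
      (𝓝 (√3 / (2 * Real.pi))) := by
  set c := (2 / (3 * √3)) ^ ((1 : ℝ) / 3)
  set g : ℝ → ℝ := fun x => 3 / (4 * Real.pi) * c *
    ((1 + √(1 - 4 * x ^ 2 / 27)) ^ ((2 : ℝ) / 3)
      - (1 - √(1 - 4 * x ^ 2 / 27)) ^ ((2 : ℝ) / 3))
  have hg : Continuous g := by
    have := Real.continuous_rpow_const (q := (2 : ℝ) / 3) (by norm_num)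
    fun_prop
  have h3 : √3 ^ 2 = 3 := Real.sq_sqrt zero_le_three
  have hc : c * 2 ^ ((2 : ℝ) / 3) = 2 / √3 := by
    refine (pow_left_inj₀ (by positivity) (by positivity) three_ne_zero).mp ?_
    rw [mul_pow, rpow_div_three_pow_three (by positivity), Real.rpow_one,
      rpow_div_three_pow_three (by positivity), Real.rpow_two]
    field_simp
    linear_combination h3
  have hg0 : g 0 = √3 / (2 * Real.pi) := by
    simp only [g]
    norm_num
    rw [mul_assoc, hc]
    field_simp
    linear_combination -4 * h3
  have heq : ∀ x : ℝ, x ≠ 0 → ρtwo x / |x| ^ ((1 : ℝ) / 3) = g x := by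
    intro x hx
    have hx' : 0 < |x| ^ ((1 : ℝ) / 3) := by positivity
    rw [ρtwo, mul_div_assoc, mul_comm 2 |x|, mul_div_assoc,
      Real.mul_rpow (abs_nonneg x) (by positivity)]
    simp only [g]
    field_simp
    ring
  rw [← hg0]
  exact ((hg.tendsto 0).mono_left nhdsWithin_le_nhds).congr'
    (eventually_nhdsWithin_of_forall fun x hx => (heq x hx).symm)

/-- At `t = 1` the two-source density, obtained from the cubic
`G³ − 2zG² + z²G − z = 0` (branch with `Im G < 0` on the upper half-plane) via
`ρ(1,x) = −(1/π) lim_{ε↓0} Im G(1, x+iε)`, equals the explicit formula `ρtwo` on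
`0 < |x| < 3√3/2`, and behaves asymptotically as `(√3/(2π))|x|^{1/3}` as `x → 0`. -/
theorem two_source_density_at_merge (G : ℂ → ℂ) (ρ : ℝ → ℝ)
    (hcubic : ∀ z : ℂ, z.im ≠ 0 →
      (G z) ^ 3 - 2 * z * (G z) ^ 2 + z ^ 2 * G z - z = 0)
    (hbranch : ∀ z : ℂ, 0 < z.im → (G z).im < 0)
    (hρ : ∀ x : ℝ, Tendsto
      (fun ε : ℝ => -(1 / Real.pi) * (G ((x : ℂ) + Complex.I * ε)).im)
      (nhdsWithin 0 (Set.Ioi 0)) (nhds (ρ x))) :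
    (∀ x : ℝ, 0 < |x| → |x| < 3 * Real.sqrt 3 / 2 → ρ x = ρtwo x) ∧
    Tendsto (fun x : ℝ => ρtwo x / |x| ^ ((1 : ℝ) / 3))
      (nhdsWithin 0 {(0 : ℝ)}ᶜ) (nhds (Real.sqrt 3 / (2 * Real.pi))) := by
  refine ⟨fun x hx0 hx3 => ?_, tendsto_ρtwo_div_rpow⟩
  obtain ⟨r, a, β, hβ, hρtwo, hq, hfac⟩ :=
    exists_mergeCubic_factorization (abs_pos.mp hx0) hx3
  have hL : Tendsto (fun ε : ℝ => (G (x + I * ε)).im) (𝓝[>] 0)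
      (𝓝 (-(Real.pi * ρ x))) := by
    convert (hρ x).const_mul (-Real.pi) using 2 with ε
    · field_simp [Real.pi_ne_zero]
    · ring
  have := eq_neg_of_tendsto_im_root hβ hq hfac (fun ε hε => hcubic _ (by simpa using hε.ne'))
    (fun ε hε => hbranch _ (by simpa using hε)) hL
  exact mul_left_cancel₀ Real.pi_ne_zero (by linarith)
end
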